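/- For every positive integer d and real numbers 0 < δ ≤ M, there exists a constant c > 0 such that for all symmetric d × d real matrices Σ₁, Σ₂ satisfying δ I ⪯ Σ_i ⪯ M I (i = 1, 2), one has ∫_{ℝ^d} | φ_{Σ₁}(x) − φ_{Σ₂}(x) | dx ≤ c ‖Σ₁ − Σ₂‖, where ‖·‖ is the operator (or Frobenius) norm. Equivalently, the total variation distance between N(0, Σ₁) and N(0, Σ₂) is bounded by (c/2) ‖Σ₁ − Σ₂‖. -/

import Mathlib

open MeasureTheory Matrix

/-- The Lebesgue density of the centered Gaussian `N(0, S)` on `ℝ^d`. -/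
noncomputable def gaussianPDF (d : ℕ) (S : Matrix (Fin d) (Fin d) ℝ)
    (x : Fin d → ℝ) : ℝ :=
  (2 * Real.pi) ^ (-(d : ℝ) / 2) * S.det ^ (-(1 : ℝ) / 2) *
    Real.exp (-(1 / 2) * (x ⬝ᵥ (S⁻¹ *ᵥ x)))

/-- The Frobenius norm of a real matrix. -/
noncomputable def frobNorm {d : ℕ} (M : Matrix (Fin d) (Fin d) ℝ) : ℝ :=
  Real.sqrt (∑ i, ∑ j, (M i j) ^ 2)

/-!
Write `φ_Σ(x) = (2π)^{-d/2} (det Σ)^{-1/2} exp(-q_Σ(x)/2)` with `q_Σ(x) = xᵀ Σ⁻¹ x`.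
On the band `δ I ⪯ Σ ⪯ M I` the entries of `Σ` are bounded by `M` and `det Σ ≥ δ^d`; the
determinant, a continuous multilinear function of the rows, is Lipschitz on bounded sets, hence so
is `(det Σ)^{-1/2}`. For the exponential factor,
`q_{Σ₂}(x) - q_{Σ₁}(x) = (Σ₁⁻¹x)ᵀ (Σ₁ - Σ₂) (Σ₂⁻¹x)` is at most `‖Σ₁ - Σ₂‖ |x|² / δ²`, while
`q_Σ(x) ≥ |x|² / M` keeps both exponentials below `exp(-|x|²/(2M))`; the surplus factor `|x|²` is
absorbed by `|x|² exp(-|x|²/(4M)) ≤ 4M`. So `|φ_{Σ₁} - φ_{Σ₂}|` is pointwise at most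
`C ‖Σ₁ - Σ₂‖ exp(-|x|²/(4M))`, which is integrable.
-/

namespace Matrix

variable {n : Type*}

theorem PosSemidef.posDef_of_sub_smul_one [DecidableEq n] {c : ℝ} {A : Matrix n n ℝ}
    (hc : 0 < c) (h : (A - c • 1).PosSemidef) : A.PosDef := by
  simpa using PosDef.posSemidef_add h (PosDef.one.smul hc)

variable [Fintype n]

theorem dotProduct_self_nonneg (x : n → ℝ) : 0 ≤ x ⬝ᵥ x :=
  Finset.sum_nonneg fun i _ => mul_self_nonneg (x i)

theorem dotProduct_sq_le (x y : n → ℝ) : (x ⬝ᵥ y) ^ 2 ≤ (x ⬝ᵥ x) * (y ⬝ᵥ y) := by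
  simpa only [dotProduct, sq] using Finset.sum_mul_sq_le_sq_mul_sq Finset.univ x y

theorem IsSymm.mulVec_dotProduct {A : Matrix n n ℝ} (hA : A.IsSymm) (x y : n → ℝ) :
    (A *ᵥ x) ⬝ᵥ y = x ⬝ᵥ (A *ᵥ y) := by
  rw [dotProduct_mulVec, ← mulVec_transpose, hA.eq, dotProduct_comm]

theorem PosSemidef.dotProduct_mulVec_sq_le {A : Matrix n n ℝ} (hA : A.PosSemidef)
    (x y : n → ℝ) :
    (x ⬝ᵥ (A *ᵥ y)) ^ 2 ≤ (x ⬝ᵥ (A *ᵥ x)) * (y ⬝ᵥ (A *ᵥ y)) := by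
  classical
  have hnonneg (z : n → ℝ) : 0 ≤ toBilin' A z z := by
    simpa only [toBilin'_apply', star_trivial] using hA.dotProduct_mulVec_nonneg z
  have hsymm : LinearMap.IsSymm (toBilin' A) := LinearMap.BilinForm.isSymm_iff.mp
    (isSymm_toBilin'_iff_isSymm.mpr (isHermitian_iff_isSymm.mp hA.isHermitian))
  simpa only [toBilin'_apply'] using (toBilin' A).apply_sq_le_of_symm hnonneg hsymm x y

variable [DecidableEq n]

theorem PosSemidef.le_dotProduct_mulVec {c : ℝ} {A : Matrix n n ℝ} (h : (A - c • 1).PosSemidef)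
    (x : n → ℝ) : c * (x ⬝ᵥ x) ≤ x ⬝ᵥ (A *ᵥ x) := by
  have := h.dotProduct_mulVec_nonneg x
  simp only [star_trivial, sub_mulVec, dotProduct_sub, smul_mulVec, one_mulVec, dotProduct_smul,
    smul_eq_mul] at this
  linarith

theorem PosSemidef.dotProduct_mulVec_le {c : ℝ} {A : Matrix n n ℝ} (h : (c • 1 - A).PosSemidef)
    (x : n → ℝ) : x ⬝ᵥ (A *ᵥ x) ≤ c * (x ⬝ᵥ x) := by
  have := h.dotProduct_mulVec_nonneg x
  simp only [star_trivial, sub_mulVec, dotProduct_sub, smul_mulVec, one_mulVec, dotProduct_smul,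
    smul_eq_mul] at this
  linarith

theorem PosSemidef.pow_card_le_det {c : ℝ} {A : Matrix n n ℝ} (hc : 0 ≤ c)
    (h : (A - c • 1).PosSemidef) : c ^ Fintype.card n ≤ A.det := by
  have hA : A.IsHermitian := by
    simpa using h.isHermitian.add (isHermitian_one.smul (IsSelfAdjoint.all c))
  have heig (i : n) : c ≤ hA.eigenvalues i := by
    have hunit := orthonormal_iff_ite.mp hA.eigenvectorBasis.orthonormal i i
    rw [if_pos rfl, EuclideanSpace.inner_eq_star_dotProduct] at hunit
    have hv : (hA.eigenvectorBasis i : n → ℝ) ⬝ᵥ (hA.eigenvectorBasis i : n → ℝ) = 1 := by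
      simpa [dotProduct_comm] using hunit
    simpa [hA.eigenvalues_eq i, hv] using h.le_dotProduct_mulVec (hA.eigenvectorBasis i)
  calc c ^ Fintype.card n = ∏ _i : n, c := by simp
    _ ≤ ∏ i, hA.eigenvalues i := Finset.prod_le_prod (fun _ _ => hc) (fun i _ => heig i)
    _ = A.det := by simp [hA.det_eq_prod_eigenvalues]

theorem PosSemidef.abs_apply_le {c : ℝ} {A : Matrix n n ℝ} (hA : A.PosSemidef)
    (h : (c • 1 - A).PosSemidef) (i j : n) : |A i j| ≤ c := by
  have hdiag (k : n) : A k k ≤ c := by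
    simpa using h.dotProduct_mulVec_le (Pi.single k 1)
  have hc : 0 ≤ c := (hA.diag_nonneg (i := i)).trans (hdiag i)
  refine abs_le_of_sq_le_sq ?_ hc
  have hcs := hA.dotProduct_mulVec_sq_le (Pi.single i 1) (Pi.single j 1)
  simp only [mulVec_single, MulOpposite.op_one, one_smul, single_dotProduct, col_apply,
    one_mul] at hcs
  nlinarith [hA.diag_nonneg (i := i), hA.diag_nonneg (i := j), hdiag i, hdiag j]

theorem PosDef.mulVec_inv_mulVec {A : Matrix n n ℝ} (hA : A.PosDef) (x : n → ℝ) :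
    A *ᵥ (A⁻¹ *ᵥ x) = x := by
  rw [mulVec_mulVec, mul_nonsing_inv _ ((isUnit_iff_isUnit_det A).mp hA.isUnit), one_mulVec]

theorem PosDef.dotProduct_self_le_mul_dotProduct_inv_mulVec {c : ℝ} {A : Matrix n n ℝ}
    (hA : A.PosDef) (h : (c • 1 - A).PosSemidef) (x : n → ℝ) :
    x ⬝ᵥ x ≤ c * (x ⬝ᵥ (A⁻¹ *ᵥ x)) := by
  set y := A⁻¹ *ᵥ x
  have hAy : A *ᵥ y = x := hA.mulVec_inv_mulVec x
  have hsymm : A.IsSymm := isHermitian_iff_isSymm.mp hA.isHermitian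
  have hcs := hA.posSemidef.dotProduct_mulVec_sq_le y x
  rw [← hsymm.mulVec_dotProduct, hAy, dotProduct_comm y x] at hcs
  have hup := h.dotProduct_mulVec_le x
  rcases (dotProduct_self_nonneg x).eq_or_lt with h0 | hpos
  · rw [← h0, dotProduct_self_eq_zero.mp h0.symm]
    simp
  · have hq : 0 ≤ x ⬝ᵥ y := by
      simpa [← hAy, hsymm.mulVec_dotProduct] using hA.posSemidef.dotProduct_mulVec_nonneg y
    have := mul_le_mul_of_nonneg_left hup hq
    nlinarith

theorem PosSemidef.sq_mul_dotProduct_inv_mulVec_le {c : ℝ} {A : Matrix n n ℝ} (hc : 0 < c)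
    (h : (A - c • 1).PosSemidef) (x : n → ℝ) :
    c ^ 2 * ((A⁻¹ *ᵥ x) ⬝ᵥ (A⁻¹ *ᵥ x)) ≤ x ⬝ᵥ x := by
  set y := A⁻¹ *ᵥ x
  have hlow := h.le_dotProduct_mulVec y
  rw [(h.posDef_of_sub_smul_one hc).mulVec_inv_mulVec] at hlow
  have hcs := dotProduct_sq_le y x
  rcases (dotProduct_self_nonneg y).eq_or_lt with h0 | hpos
  · rw [← h0, mul_zero]
    exact dotProduct_self_nonneg x
  · have hsq : (c * (y ⬝ᵥ y)) ^ 2 ≤ (y ⬝ᵥ x) ^ 2 := pow_le_pow_left₀ (by positivity) hlow 2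
    nlinarith

end Matrix

theorem abs_rpow_neg_half_sub_le {s a b : ℝ} (hs : 0 < s) (ha : s ≤ a) (hb : s ≤ b) :
    |a ^ (-(1 : ℝ) / 2) - b ^ (-(1 : ℝ) / 2)| ≤ |a - b| / (2 * √s ^ 3) := by
  have hrpow {y : ℝ} (hy : 0 ≤ y) : y ^ (-(1 : ℝ) / 2) = (√y)⁻¹ := by
    rw [neg_div, Real.rpow_neg hy, ← Real.sqrt_eq_rpow]
  have hs' : 0 < √s := Real.sqrt_pos.mpr hs
  have hsa : √s ≤ √a := Real.sqrt_le_sqrt ha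
  have hsb : √s ≤ √b := Real.sqrt_le_sqrt hb
  have ha' : 0 < √a := hs'.trans_le hsa
  have hb' : 0 < √b := hs'.trans_le hsb
  have key : (√a)⁻¹ - (√b)⁻¹ = (b - a) / (√a * √b * (√a + √b)) := by
    rw [eq_div_iff (by positivity)]
    field_simp
    linear_combination Real.sq_sqrt (hs.le.trans hb) - Real.sq_sqrt (hs.le.trans ha)
  have hden : 2 * √s ^ 3 ≤ √a * √b * (√a + √b) := by
    calc 2 * √s ^ 3 = √s * √s * (√s + √s) := by ring
      _ ≤ √a * √b * (√a + √b) := by gcongr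
  rw [hrpow (hs.le.trans ha), hrpow (hs.le.trans hb), key, abs_div, abs_sub_comm b a,
    abs_of_pos (show 0 < √a * √b * (√a + √b) by positivity)]
  exact div_le_div_of_nonneg_left (abs_nonneg _) (by positivity) hden

theorem abs_exp_neg_sub_exp_neg_le {u v L : ℝ} (hu : L ≤ u) (hv : L ≤ v) :
    |Real.exp (-u) - Real.exp (-v)| ≤ |u - v| * Real.exp (-L) := by
  wlog huv : u ≤ v generalizing u v
  · rw [abs_sub_comm, abs_sub_comm u v]
    exact this hv hu (le_of_not_ge huv)
  have hsplit : Real.exp (-v) = Real.exp (-u) * Real.exp (-(v - u)) := by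
    rw [← Real.exp_add]; ring_nf
  have htangent : 1 - (v - u) ≤ Real.exp (-(v - u)) := by
    linarith [Real.add_one_le_exp (-(v - u))]
  have hmono : Real.exp (-u) ≤ Real.exp (-L) := Real.exp_le_exp.mpr (by linarith)
  rw [abs_of_nonneg (sub_nonneg.mpr (Real.exp_le_exp.mpr (by linarith))),
    abs_of_nonpos (by linarith)]
  nlinarith [mul_le_mul_of_nonneg_left htangent (Real.exp_pos (-u)).le,
    mul_le_mul_of_nonneg_right hmono (sub_nonneg.mpr huv)]

theorem mul_exp_neg_two_mul_le {b : ℝ} (hb : 0 < b) (t : ℝ) :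
    t * Real.exp (-(2 * b * t)) ≤ Real.exp (-(b * t)) / b := by
  have hlin : b * t ≤ Real.exp (b * t) := by linarith [Real.add_one_le_exp (b * t)]
  have hsq : Real.exp (-(2 * b * t)) = Real.exp (-(b * t)) * Real.exp (-(b * t)) := by
    rw [← Real.exp_add]; ring_nf
  have hinv : Real.exp (b * t) * Real.exp (-(b * t)) = 1 := by rw [← Real.exp_add]; simp
  rw [le_div_iff₀ hb, hsq]
  calc t * (Real.exp (-(b * t)) * Real.exp (-(b * t))) * b
      = b * t * (Real.exp (-(b * t)) * Real.exp (-(b * t))) := by ring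
    _ ≤ Real.exp (b * t) * (Real.exp (-(b * t)) * Real.exp (-(b * t))) := by gcongr
    _ = Real.exp (-(b * t)) := by rw [← mul_assoc, hinv, one_mul]

theorem integrable_exp_neg_mul_dotProduct_self {n : Type*} [Fintype n] {b : ℝ} (hb : 0 < b) :
    Integrable (fun x : n → ℝ => Real.exp (-b * (x ⬝ᵥ x))) := by
  have hprod : (fun x : n → ℝ => Real.exp (-b * (x ⬝ᵥ x))) =
      fun x => ∏ i, Real.exp (-b * x i ^ 2) := by
    funext x
    rw [← Real.exp_sum, dotProduct, Finset.mul_sum]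
    simp only [sq]
  rw [hprod]
  exact Integrable.fintype_prod (f := fun _ t => Real.exp (-b * t ^ 2))
    fun _ => integrable_exp_neg_mul_sq hb

section

variable {d : ℕ} {δ M : ℝ} {S S₁ S₂ : Matrix (Fin d) (Fin d) ℝ}

theorem frobNorm_nonneg (A : Matrix (Fin d) (Fin d) ℝ) : 0 ≤ frobNorm A := Real.sqrt_nonneg _

theorem sq_frobNorm (A : Matrix (Fin d) (Fin d) ℝ) : frobNorm A ^ 2 = ∑ i, A i ⬝ᵥ A i := by
  rw [frobNorm, Real.sq_sqrt (by positivity)]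
  simp [dotProduct, sq]

theorem abs_apply_le_frobNorm (A : Matrix (Fin d) (Fin d) ℝ) (i j : Fin d) :
    |A i j| ≤ frobNorm A := by
  rw [frobNorm, ← Real.sqrt_sq_eq_abs]
  gcongr
  calc A i j ^ 2 ≤ ∑ j', A i j' ^ 2 :=
        Finset.single_le_sum (f := fun j' => A i j' ^ 2) (fun _ _ => sq_nonneg _)
          (Finset.mem_univ j)
    _ ≤ ∑ i', ∑ j', A i' j' ^ 2 :=
        Finset.single_le_sum (f := fun i' => ∑ j', A i' j' ^ 2)
          (fun _ _ => by positivity) (Finset.mem_univ i)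

theorem dotProduct_mulVec_sq_le_frobNorm (A : Matrix (Fin d) (Fin d) ℝ) (u v : Fin d → ℝ) :
    (u ⬝ᵥ (A *ᵥ v)) ^ 2 ≤ frobNorm A ^ 2 * (u ⬝ᵥ u) * (v ⬝ᵥ v) := by
  have hrows : (A *ᵥ v) ⬝ᵥ (A *ᵥ v) ≤ frobNorm A ^ 2 * (v ⬝ᵥ v) :=
    calc (A *ᵥ v) ⬝ᵥ (A *ᵥ v) = ∑ i, (A i ⬝ᵥ v) ^ 2 := Finset.sum_congr rfl fun i _ => (sq _).symm
      _ ≤ ∑ i, (A i ⬝ᵥ A i) * (v ⬝ᵥ v) := Finset.sum_le_sum fun i _ => dotProduct_sq_le _ _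
      _ = frobNorm A ^ 2 * (v ⬝ᵥ v) := by rw [sq_frobNorm, Finset.sum_mul]
  calc (u ⬝ᵥ (A *ᵥ v)) ^ 2 ≤ (u ⬝ᵥ u) * ((A *ᵥ v) ⬝ᵥ (A *ᵥ v)) := dotProduct_sq_le _ _
    _ ≤ (u ⬝ᵥ u) * (frobNorm A ^ 2 * (v ⬝ᵥ v)) := by
        gcongr
        exact dotProduct_self_nonneg u
    _ = _ := by ring

theorem exists_abs_det_sub_le_frobNorm (R : ℝ) : ∃ K, ∀ A B : Matrix (Fin d) (Fin d) ℝ,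
    (∀ i j, |A i j| ≤ R) → (∀ i j, |B i j| ≤ R) → |A.det - B.det| ≤ K * frobNorm (A - B) := by
  obtain ⟨C, hC, hbound⟩ := (detRowAlternating (R := ℝ) (n := Fin d)).exists_bound_of_continuous
    continuous_id.matrix_det
  refine ⟨C * d * |R| ^ (d - 1), fun A B hA hB => ?_⟩
  have hnorm {X : Fin d → Fin d → ℝ} {r : ℝ} (hr : 0 ≤ r) (hX : ∀ i j, |X i j| ≤ r) : ‖X‖ ≤ r :=
    (pi_norm_le_iff_of_nonneg hr).mpr fun i => (pi_norm_le_iff_of_nonneg hr).mpr fun j => hX i j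
  have key := (detRowAlternating (R := ℝ) (n := Fin d)).norm_image_sub_le_of_bound hC.le hbound A B
  simp only [Fintype.card_fin, Real.norm_eq_abs] at key
  refine key.trans ?_
  gcongr
  · exact (norm_nonneg _).trans (le_max_left _ _)
  · exact max_le (hnorm (abs_nonneg R) fun i j => (hA i j).trans (le_abs_self R))
      (hnorm (abs_nonneg R) fun i j => (hB i j).trans (le_abs_self R))
  · exact hnorm (Real.sqrt_nonneg _) fun i j => abs_apply_le_frobNorm (A - B) i j

theorem abs_dotProduct_inv_mulVec_sub_le (hδ : 0 < δ)
    (h₁ : (S₁ - δ • 1).PosSemidef) (h₂ : (S₂ - δ • 1).PosSemidef) (x : Fin d → ℝ) :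
    |x ⬝ᵥ (S₁⁻¹ *ᵥ x) - x ⬝ᵥ (S₂⁻¹ *ᵥ x)| ≤ frobNorm (S₁ - S₂) * (x ⬝ᵥ x) / δ ^ 2 := by
  set u := S₁⁻¹ *ᵥ x
  set v := S₂⁻¹ *ᵥ x
  have hS₁ := h₁.posDef_of_sub_smul_one hδ
  have hS₂ := h₂.posDef_of_sub_smul_one hδ
  have hdiff : x ⬝ᵥ v - x ⬝ᵥ u = u ⬝ᵥ ((S₁ - S₂) *ᵥ v) := by
    rw [sub_mulVec, dotProduct_sub,
      ← (isHermitian_iff_isSymm.mp hS₁.isHermitian).mulVec_dotProduct, hS₁.mulVec_inv_mulVec,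
      hS₂.mulVec_inv_mulVec, dotProduct_comm u x]
  have hu : u ⬝ᵥ u ≤ (x ⬝ᵥ x) / δ ^ 2 :=
    (le_div_iff₀' (by positivity)).mpr (h₁.sq_mul_dotProduct_inv_mulVec_le hδ x)
  have hv : v ⬝ᵥ v ≤ (x ⬝ᵥ x) / δ ^ 2 :=
    (le_div_iff₀' (by positivity)).mpr (h₂.sq_mul_dotProduct_inv_mulVec_le hδ x)
  rw [abs_sub_comm, hdiff]
  have hx := dotProduct_self_nonneg x
  refine abs_le_of_sq_le_sq ?_ (div_nonneg (mul_nonneg (frobNorm_nonneg _) hx) (by positivity))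
  calc (u ⬝ᵥ ((S₁ - S₂) *ᵥ v)) ^ 2 ≤ frobNorm (S₁ - S₂) ^ 2 * (u ⬝ᵥ u) * (v ⬝ᵥ v) :=
        dotProduct_mulVec_sq_le_frobNorm _ u v
    _ ≤ frobNorm (S₁ - S₂) ^ 2 * ((x ⬝ᵥ x) / δ ^ 2) * ((x ⬝ᵥ x) / δ ^ 2) := by
        have := div_nonneg hx (sq_nonneg δ)
        gcongr
        exact dotProduct_self_nonneg v
    _ = (frobNorm (S₁ - S₂) * (x ⬝ᵥ x) / δ ^ 2) ^ 2 := by ring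

theorem exists_abs_det_rpow_sub_le (hδ : 0 < δ) (M : ℝ) :
    ∃ K, ∀ S₁ S₂ : Matrix (Fin d) (Fin d) ℝ,
      (S₁ - δ • 1).PosSemidef → (M • 1 - S₁).PosSemidef →
      (S₂ - δ • 1).PosSemidef → (M • 1 - S₂).PosSemidef →
      |S₁.det ^ (-(1 : ℝ) / 2) - S₂.det ^ (-(1 : ℝ) / 2)| ≤ K * frobNorm (S₁ - S₂) := by
  obtain ⟨K, hK⟩ := exists_abs_det_sub_le_frobNorm (d := d) M
  refine ⟨K / (2 * √(δ ^ d) ^ 3), fun S₁ S₂ h₁ h₁' h₂ h₂' => ?_⟩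
  have hdet₁ : δ ^ d ≤ S₁.det := by simpa using h₁.pow_card_le_det hδ.le
  have hdet₂ : δ ^ d ≤ S₂.det := by simpa using h₂.pow_card_le_det hδ.le
  have hentries₁ := (h₁.posDef_of_sub_smul_one hδ).posSemidef.abs_apply_le h₁'
  have hentries₂ := (h₂.posDef_of_sub_smul_one hδ).posSemidef.abs_apply_le h₂'
  calc |S₁.det ^ (-(1 : ℝ) / 2) - S₂.det ^ (-(1 : ℝ) / 2)|
      ≤ |S₁.det - S₂.det| / (2 * √(δ ^ d) ^ 3) :=
        abs_rpow_neg_half_sub_le (by positivity) hdet₁ hdet₂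
    _ ≤ K * frobNorm (S₁ - S₂) / (2 * √(δ ^ d) ^ 3) := by
        gcongr
        exact hK S₁ S₂ hentries₁ hentries₂
    _ = K / (2 * √(δ ^ d) ^ 3) * frobNorm (S₁ - S₂) := by ring

theorem exp_neg_half_dotProduct_inv_mulVec_le (hM : 0 < M) (hS : S.PosDef)
    (hS' : (M • 1 - S).PosSemidef) (x : Fin d → ℝ) :
    Real.exp (-(1 / 2) * (x ⬝ᵥ (S⁻¹ *ᵥ x))) ≤ Real.exp (-(4 * M)⁻¹ * (x ⬝ᵥ x)) := by
  have hq := hS.dotProduct_self_le_mul_dotProduct_inv_mulVec hS' x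
  have hx := dotProduct_self_nonneg x
  have hscale : (4 * M)⁻¹ * (x ⬝ᵥ x) * (4 * M) = x ⬝ᵥ x := by field_simp
  rw [Real.exp_le_exp]
  nlinarith

theorem abs_exp_neg_half_dotProduct_inv_mulVec_sub_le (hδ : 0 < δ) (hM : 0 < M)
    (h₁ : (S₁ - δ • 1).PosSemidef) (h₁' : (M • 1 - S₁).PosSemidef)
    (h₂ : (S₂ - δ • 1).PosSemidef) (h₂' : (M • 1 - S₂).PosSemidef) (x : Fin d → ℝ) :
    |Real.exp (-(1 / 2) * (x ⬝ᵥ (S₁⁻¹ *ᵥ x))) - Real.exp (-(1 / 2) * (x ⬝ᵥ (S₂⁻¹ *ᵥ x)))| ≤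
      2 * M / δ ^ 2 * frobNorm (S₁ - S₂) * Real.exp (-(4 * M)⁻¹ * (x ⬝ᵥ x)) := by
  set t := x ⬝ᵥ x
  set q₁ := x ⬝ᵥ (S₁⁻¹ *ᵥ x)
  set q₂ := x ⬝ᵥ (S₂⁻¹ *ᵥ x)
  set F := frobNorm (S₁ - S₂)
  set b := (4 * M)⁻¹
  have hb : 0 < b := by positivity
  have hL : t / (2 * M) = 2 * b * t := by simp only [b]; field_simp; ring
  have hq₁ : t / (2 * M) ≤ q₁ / 2 := by
    have := (h₁.posDef_of_sub_smul_one hδ).dotProduct_self_le_mul_dotProduct_inv_mulVec h₁' x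
    rw [div_le_div_iff₀ (by positivity) two_pos]; nlinarith
  have hq₂ : t / (2 * M) ≤ q₂ / 2 := by
    have := (h₂.posDef_of_sub_smul_one hδ).dotProduct_self_le_mul_dotProduct_inv_mulVec h₂' x
    rw [div_le_div_iff₀ (by positivity) two_pos]; nlinarith
  have hF : 0 ≤ F / (2 * δ ^ 2) := div_nonneg (frobNorm_nonneg _) (by positivity)
  calc |Real.exp (-(1 / 2) * q₁) - Real.exp (-(1 / 2) * q₂)|
      = |Real.exp (-(q₁ / 2)) - Real.exp (-(q₂ / 2))| := by ring_nf
    _ ≤ |q₁ / 2 - q₂ / 2| * Real.exp (-(t / (2 * M))) := abs_exp_neg_sub_exp_neg_le hq₁ hq₂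
    _ = |q₁ - q₂| / 2 * Real.exp (-(2 * b * t)) := by
        rw [← sub_div, abs_div, abs_two, hL]
    _ ≤ F * t / δ ^ 2 / 2 * Real.exp (-(2 * b * t)) := by
        gcongr
        exact abs_dotProduct_inv_mulVec_sub_le hδ h₁ h₂ x
    _ = F / (2 * δ ^ 2) * (t * Real.exp (-(2 * b * t))) := by ring
    _ ≤ F / (2 * δ ^ 2) * (Real.exp (-(b * t)) / b) := by
        gcongr
        exact mul_exp_neg_two_mul_le hb t
    _ = 2 * M / δ ^ 2 * F * Real.exp (-b * t) := by
        simp only [b, neg_mul]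
        field_simp
        ring

theorem exists_abs_gaussianPDF_sub_le (hδ : 0 < δ) (hM : 0 < M) :
    ∃ C, ∀ S₁ S₂ : Matrix (Fin d) (Fin d) ℝ,
      (S₁ - δ • 1).PosSemidef → (M • 1 - S₁).PosSemidef →
      (S₂ - δ • 1).PosSemidef → (M • 1 - S₂).PosSemidef → ∀ x,
      |gaussianPDF d S₁ x - gaussianPDF d S₂ x| ≤
        C * frobNorm (S₁ - S₂) * Real.exp (-(4 * M)⁻¹ * (x ⬝ᵥ x)) := by
  obtain ⟨K, hK⟩ := exists_abs_det_rpow_sub_le (d := d) hδ M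
  set P := (2 * Real.pi) ^ (-(d : ℝ) / 2)
  have hP : 0 < P := by positivity
  refine ⟨P * (K + (δ ^ d) ^ (-(1 : ℝ) / 2) * (2 * M / δ ^ 2)),
    fun S₁ S₂ h₁ h₁' h₂ h₂' x => ?_⟩
  set D₁ := S₁.det ^ (-(1 : ℝ) / 2)
  set D₂ := S₂.det ^ (-(1 : ℝ) / 2)
  set E₁ := Real.exp (-(1 / 2) * (x ⬝ᵥ (S₁⁻¹ *ᵥ x)))
  set E₂ := Real.exp (-(1 / 2) * (x ⬝ᵥ (S₂⁻¹ *ᵥ x)))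
  set F := frobNorm (S₁ - S₂)
  set env := Real.exp (-(4 * M)⁻¹ * (x ⬝ᵥ x))
  have hsplit :
      gaussianPDF d S₁ x - gaussianPDF d S₂ x = P * ((D₁ - D₂) * E₁ + D₂ * (E₁ - E₂)) := by
    simp only [gaussianPDF]
    ring
  have hD₂ : D₂ ≤ (δ ^ d) ^ (-(1 : ℝ) / 2) :=
    Real.rpow_le_rpow_of_nonpos (by positivity) (by simpa using h₂.pow_card_le_det hδ.le)
      (by norm_num)
  have hD₂0 : 0 ≤ D₂ := Real.rpow_nonneg (h₂.posDef_of_sub_smul_one hδ).det_pos.le _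
  have hE₁ : E₁ ≤ env :=
    exp_neg_half_dotProduct_inv_mulVec_le hM (h₁.posDef_of_sub_smul_one hδ) h₁' x
  have hDdiff : |D₁ - D₂| ≤ K * F := hK S₁ S₂ h₁ h₁' h₂ h₂'
  have hEdiff : |E₁ - E₂| ≤ 2 * M / δ ^ 2 * F * env :=
    abs_exp_neg_half_dotProduct_inv_mulVec_sub_le hδ hM h₁ h₁' h₂ h₂' x
  rw [hsplit, abs_mul, abs_of_pos hP]
  calc P * |(D₁ - D₂) * E₁ + D₂ * (E₁ - E₂)| ≤ P * (|D₁ - D₂| * E₁ + D₂ * |E₁ - E₂|) := by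
        gcongr
        refine (abs_add_le _ _).trans_eq ?_
        rw [abs_mul, abs_mul, abs_of_nonneg (Real.exp_pos _).le, abs_of_nonneg hD₂0]
    _ ≤ P * (K * F * env + (δ ^ d) ^ (-(1 : ℝ) / 2) * (2 * M / δ ^ 2 * F * env)) := by
        gcongr P * (?_ + ?_)
        · exact mul_le_mul hDdiff hE₁ (Real.exp_pos _).le ((abs_nonneg _).trans hDdiff)
        · exact mul_le_mul hD₂ hEdiff (abs_nonneg _) (by positivity)
    _ = P * (K + (δ ^ d) ^ (-(1 : ℝ) / 2) * (2 * M / δ ^ 2)) * F * env := by ring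

end

theorem gaussian_L1_lipschitz_in_covariance_general
    (d : ℕ) (δ M : ℝ) (hδ : 0 < δ) (hδM : δ ≤ M) :
    ∃ c > 0, ∀ S₁ S₂ : Matrix (Fin d) (Fin d) ℝ,
      S₁.IsSymm → S₂.IsSymm →
      (S₁ - δ • 1).PosSemidef → ((M : ℝ) • 1 - S₁).PosSemidef →
      (S₂ - δ • 1).PosSemidef → ((M : ℝ) • 1 - S₂).PosSemidef →
      ∫ x : Fin d → ℝ, |gaussianPDF d S₁ x - gaussianPDF d S₂ x| ≤
        c * frobNorm (S₁ - S₂) := by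
  have hM : 0 < M := hδ.trans_le hδM
  obtain ⟨C, hC⟩ := exists_abs_gaussianPDF_sub_le (d := d) hδ hM
  have hint := integrable_exp_neg_mul_dotProduct_self (n := Fin d) (b := (4 * M)⁻¹) (by positivity)
  set I := ∫ x : Fin d → ℝ, Real.exp (-(4 * M)⁻¹ * (x ⬝ᵥ x))
  have hI : 0 ≤ I := integral_nonneg fun _ => (Real.exp_pos _).le
  refine ⟨|C| * I + 1, by positivity, fun S₁ S₂ _ _ h₁ h₁' h₂ h₂' => ?_⟩
  calc ∫ x, |gaussianPDF d S₁ x - gaussianPDF d S₂ x|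
      ≤ ∫ x, C * frobNorm (S₁ - S₂) * Real.exp (-(4 * M)⁻¹ * (x ⬝ᵥ x)) :=
        integral_mono_of_nonneg (ae_of_all _ fun _ => abs_nonneg _) (hint.const_mul _)
          (ae_of_all _ (hC S₁ S₂ h₁ h₁' h₂ h₂'))
    _ = C * I * frobNorm (S₁ - S₂) := by rw [integral_const_mul]; ring
    _ ≤ (|C| * I + 1) * frobNorm (S₁ - S₂) := by
        have := frobNorm_nonneg (S₁ - S₂)
        gcongr
        nlinarith [le_abs_self C]

/-- Lipschitz bound, uniform over `δI ⪯ Σ ⪯ MI`, of the `L¹` distance between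
centered Gaussian densities in terms of the norm of the difference of covariances:
`∫ |φ_{Σ₁} − φ_{Σ₂}| ≤ c ‖Σ₁ − Σ₂‖`, i.e. a total-variation bound for
`N(0, Σ₁)` versus `N(0, Σ₂)`. -/
theorem gaussian_L1_lipschitz_in_covariance
    (d : ℕ) (hd : 0 < d) (δ M : ℝ) (hδ : 0 < δ) (hδM : δ ≤ M) :
    ∃ c > 0, ∀ S₁ S₂ : Matrix (Fin d) (Fin d) ℝ,
      S₁.IsSymm → S₂.IsSymm →
      (S₁ - δ • 1).PosSemidef → ((M : ℝ) • 1 - S₁).PosSemidef →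
      (S₂ - δ • 1).PosSemidef → ((M : ℝ) • 1 - S₂).PosSemidef →
      ∫ x : Fin d → ℝ, |gaussianPDF d S₁ x - gaussianPDF d S₂ x| ≤
        c * frobNorm (S₁ - S₂) :=
  gaussian_L1_lipschitz_in_covariance_general d δ M hδ hδM
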